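/- arXiv:1706.00341 — 2 statements merged into one kernel-verified Lean document; each statement's English description precedes it below -/
import Mathlib

section
/- Rank-one rigidity of vector-valued correlation kernels: Let N, K ∈ ℕ with K ≥ 1, let u : ℝ^N → ℂ^K and h : ℝ^N → ℂ be measurable, with h(p) ≠ 0 for almost every p. Suppose that for almost every (p, p') ∈ ℝ^N × ℝ^N one has Σ_{k=1}^K u_k(p)·conj(u_k(p')) = h(p)·conj(h(p')), and that ‖u(p)‖² = |h(p)|² for almost every p. Then there exists a fixed unit vector e ∈ ℂ^K such that u(p) = h(p)·e for almost every p ∈ ℝ^N. -/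
open MeasureTheory

/-!
Dividing by `h` turns `u` into a field `v = u / h` of unit vectors whose pairwise inner
products are a.e. equal to `1`. Equality in Cauchy–Schwarz forces two unit vectors with inner
product `1` to coincide, so `v p = v p'` for a.e. pair `(p, p')`; by Fubini, `v` is then a.e.
equal to one of its values `e`.
-/

theorem norm_inv_smul_eq_one_of_norm_eq {𝕜 E : Type*} [NormedDivisionRing 𝕜]
    [SeminormedAddCommGroup E] [Module 𝕜 E] [NormSMulClass 𝕜 E] {x : E} {a : 𝕜} (ha : a ≠ 0)
    (hx : ‖x‖ = ‖a‖) : ‖a⁻¹ • x‖ = 1 := by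
  rw [norm_smul, norm_inv, hx, inv_mul_cancel₀ (norm_ne_zero_iff.mpr ha)]

theorem inv_smul_eq_inv_smul_of_inner_eq {𝕜 E : Type*} [RCLike 𝕜] [NormedAddCommGroup E]
    [InnerProductSpace 𝕜 E] {x y : E} {a b : 𝕜} (ha : a ≠ 0) (hb : b ≠ 0)
    (hx : ‖x‖ = ‖a‖) (hy : ‖y‖ = ‖b‖) (hxy : inner 𝕜 x y = inner 𝕜 a b) :
    a⁻¹ • x = b⁻¹ • y := by
  refine (inner_eq_one_iff_of_norm_eq_one (𝕜 := 𝕜) (norm_inv_smul_eq_one_of_norm_eq ha hx)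
    (norm_inv_smul_eq_one_of_norm_eq hb hy)).mp ?_
  have hconj : (starRingEnd 𝕜) a ≠ 0 := (map_ne_zero _).mpr ha
  rw [inner_smul_left, inner_smul_right, hxy, RCLike.inner_apply, map_inv₀]
  field_simp

theorem MeasureTheory.exists_ae_eq_const_of_ae_prod_eq {α β : Type*} [MeasurableSpace α]
    {μ : Measure α} [SFinite μ] [NeZero μ] {f : α → β}
    (hf : ∀ᵐ q ∂μ.prod μ, f q.1 = f q.2) : ∃ c, ∀ᵐ p ∂μ, f p = c := by
  obtain ⟨p₀, hp₀⟩ := (Measure.ae_ae_of_ae_prod hf).exists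
  exact ⟨f p₀, hp₀.mono fun _ hp => hp.symm⟩

theorem rank_one_rigidity_general
    (N K : ℕ)
    (u : EuclideanSpace ℝ (Fin N) → (Fin K → ℂ))
    (h : EuclideanSpace ℝ (Fin N) → ℂ)
    (hh_ne : ∀ᵐ p : EuclideanSpace ℝ (Fin N) ∂volume, h p ≠ 0)
    (hker : ∀ᵐ q : EuclideanSpace ℝ (Fin N) × EuclideanSpace ℝ (Fin N)
        ∂(volume.prod volume),
      ∑ k : Fin K, u q.1 k * (starRingEnd ℂ) (u q.2 k)
        = h q.1 * (starRingEnd ℂ) (h q.2))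
    (hnorm : ∀ᵐ p : EuclideanSpace ℝ (Fin N) ∂volume,
      ∑ k : Fin K, ‖u p k‖ ^ 2 = ‖h p‖ ^ 2) :
    ∃ e : Fin K → ℂ, (∑ k : Fin K, ‖e k‖ ^ 2 = 1) ∧
      ∀ᵐ p : EuclideanSpace ℝ (Fin N) ∂volume, ∀ k : Fin K, u p k = h p * e k := by
  set U : EuclideanSpace ℝ (Fin N) → EuclideanSpace ℂ (Fin K) := fun p => WithLp.toLp 2 (u p)
  have hU_norm : ∀ᵐ p ∂volume, ‖U p‖ = ‖h p‖ := hnorm.mono fun p hp => by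
    rw [← sq_eq_sq₀ (norm_nonneg _) (norm_nonneg _), EuclideanSpace.norm_sq_eq, ← hp]
  have hU_ker : ∀ᵐ q ∂(volume.prod volume),
      inner ℂ (U q.2) (U q.1) = inner ℂ (h q.2) (h q.1) :=
    hker.mono fun q hq => by simpa only [PiLp.inner_apply, RCLike.inner_apply] using hq
  have hgood : ∀ᵐ p ∂volume, h p ≠ 0 ∧ ‖U p‖ = ‖h p‖ := hh_ne.and hU_norm
  have hpairs : ∀ᵐ q ∂(volume.prod volume), (h q.1)⁻¹ • U q.1 = (h q.2)⁻¹ • U q.2 := by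
    filter_upwards [hU_ker, Measure.quasiMeasurePreserving_fst.ae hgood,
      Measure.quasiMeasurePreserving_snd.ae hgood] with q hq ⟨h₁, hU₁⟩ ⟨h₂, hU₂⟩
    exact (inv_smul_eq_inv_smul_of_inner_eq h₂ h₁ hU₂ hU₁ hq).symm
  obtain ⟨e, he⟩ := exists_ae_eq_const_of_ae_prod_eq
    (f := fun p => (h p)⁻¹ • U p) hpairs
  refine ⟨e.ofLp, ?_, ?_⟩
  · obtain ⟨p, ⟨hp, hUp⟩, hpe⟩ := (hgood.and he).exists
    rw [← EuclideanSpace.norm_sq_eq, ← hpe, norm_inv_smul_eq_one_of_norm_eq hp hUp, one_pow]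
  · filter_upwards [hh_ne, he] with p hp hpe k
    rw [← hpe]
    simp [U, mul_inv_cancel_left₀ hp]

/-- **Rank-one rigidity of vector-valued correlation kernels** (the Cauchy–Schwarz
equality-case step in the proof of the paper's no-go theorems). If the measurable
vector field `u : ℝ^N → ℂ^K` satisfies the kernel identity
`Σ_k u_k(p)·conj(u_k(p')) = h(p)·conj(h(p'))` a.e. on `ℝ^N × ℝ^N` and the norm identity
`‖u(p)‖² = |h(p)|²` a.e., where `h` is measurable and a.e. nonzero, then there is a
fixed unit vector `e ∈ ℂ^K` with `u(p) = h(p)·e` almost everywhere. -/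
theorem rank_one_rigidity
    (N K : ℕ) (hK : 1 ≤ K)
    (u : EuclideanSpace ℝ (Fin N) → (Fin K → ℂ)) (hu_meas : Measurable u)
    (h : EuclideanSpace ℝ (Fin N) → ℂ) (hh_meas : Measurable h)
    (hh_ne : ∀ᵐ p : EuclideanSpace ℝ (Fin N) ∂volume, h p ≠ 0)
    (hker : ∀ᵐ q : EuclideanSpace ℝ (Fin N) × EuclideanSpace ℝ (Fin N)
        ∂(volume.prod volume),
      ∑ k : Fin K, u q.1 k * (starRingEnd ℂ) (u q.2 k)
        = h q.1 * (starRingEnd ℂ) (h q.2))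
    (hnorm : ∀ᵐ p : EuclideanSpace ℝ (Fin N) ∂volume,
      ∑ k : Fin K, ‖u p k‖ ^ 2 = ‖h p‖ ^ 2) :
    ∃ e : Fin K → ℂ, (∑ k : Fin K, ‖e k‖ ^ 2 = 1) ∧
      ∀ᵐ p : EuclideanSpace ℝ (Fin N) ∂volume, ∀ k : Fin K, u p k = h p * e k :=
  rank_one_rigidity_general N K u h hh_ne hker hnorm
end

section
/- Constancy of the total jump rate (intermediate step in the proof of Theorem 1): Let N, K ∈ ℕ with K ≥ 1, ℏ > 0, κ_k ∈ ℝ^N and f_k : ℝ^N → ℂ measurable for k = 1,…,K, and let φ ∈ L²(ℝ^N, ℂ) with φ(p) ≠ 0 for almost every p. Suppose conditions (i) and (ii) hold: (i) Σ_k |f_k(p + ℏκ_k)·φ(p + ℏκ_k)|² = S(p)·|φ(p)|² for almost every p, where S(p) := Σ_{k=1}^K |f_k(p)|², and (ii) Σ_k f_k(p + ℏκ_k)·φ(p + ℏκ_k)·conj( f_k(p' + ℏκ_k)·φ(p' + ℏκ_k) ) = (1/2)·( S(p) + S(p') )·φ(p)·conj(φ(p')) for almost every (p, p'). Then S is almost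 everywhere equal to a constant. -/
open MeasureTheory

/-!
Write `a_k = f_k(p + ℏκ_k) φ(p + ℏκ_k)` and `b_k` likewise at `p'`. By (i), `Σ |a_k|² = S(p)|φ(p)|²`
and `Σ |b_k|² = S(p')|φ(p')|²`, so Cauchy–Schwarz applied to (ii) gives
`((S(p) + S(p'))/2)² |φ(p)|²|φ(p')|² ≤ S(p) S(p') |φ(p)|²|φ(p')|²`. As `φ` vanishes only on a null
set, this is the reverse of AM-GM, which forces `S(p) = S(p')` for almost every pair `(p, p')`,
and then `S` is a.e. equal to one of its values.
-/

theorem eq_of_add_div_two_sq_le_mul {s t : ℝ} (h : ((s + t) / 2) ^ 2 ≤ s * t) : s = t := by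
  have hsq : (s - t) ^ 2 = 0 := le_antisymm (by nlinarith) (sq_nonneg _)
  exact sub_eq_zero.mp (pow_eq_zero_iff two_ne_zero |>.mp hsq)

theorem norm_sum_mul_conj_sq_le {𝕜 ι : Type*} [RCLike 𝕜] (s : Finset ι) (a b : ι → 𝕜) :
    ‖∑ i ∈ s, a i * starRingEnd 𝕜 (b i)‖ ^ 2 ≤ (∑ i ∈ s, ‖a i‖ ^ 2) * ∑ i ∈ s, ‖b i‖ ^ 2 :=
  calc ‖∑ i ∈ s, a i * starRingEnd 𝕜 (b i)‖ ^ 2 ≤ (∑ i ∈ s, ‖a i‖ * ‖b i‖) ^ 2 := by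
        gcongr
        exact (norm_sum_le _ _).trans_eq (by simp only [norm_mul, RCLike.norm_conj])
    _ ≤ _ := Finset.sum_mul_sq_le_sq_mul_sq _ _ _

theorem eq_of_sum_mul_conj_eq {ι : Type*} [Fintype ι] {a b : ι → ℂ} {s t : ℝ} {x y : ℂ}
    (hx : x ≠ 0) (hy : y ≠ 0)
    (ha : ∑ i, ‖a i‖ ^ 2 = s * ‖x‖ ^ 2) (hb : ∑ i, ‖b i‖ ^ 2 = t * ‖y‖ ^ 2)
    (hab : ∑ i, a i * starRingEnd ℂ (b i) =
      (1 / 2 : ℂ) * ((s + t : ℝ) : ℂ) * (x * starRingEnd ℂ y)) :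
    s = t := by
  have hxy : 0 < ‖x‖ ^ 2 * ‖y‖ ^ 2 := by positivity
  refine eq_of_add_div_two_sq_le_mul (le_of_mul_le_mul_right ?_ hxy)
  calc ((s + t) / 2) ^ 2 * (‖x‖ ^ 2 * ‖y‖ ^ 2) = ‖∑ i, a i * starRingEnd ℂ (b i)‖ ^ 2 := by
        rw [hab, norm_mul, norm_mul, norm_mul, Complex.norm_real, Real.norm_eq_abs,
          RCLike.norm_conj, mul_pow, mul_pow, mul_pow, sq_abs,
          show ‖(1 / 2 : ℂ)‖ = 1 / 2 by norm_num]
        ring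
    _ ≤ (∑ i, ‖a i‖ ^ 2) * ∑ i, ‖b i‖ ^ 2 := norm_sum_mul_conj_sq_le _ _ _
    _ = s * t * (‖x‖ ^ 2 * ‖y‖ ^ 2) := by rw [ha, hb]; ring

theorem exists_ae_eq_const_of_ae_prod {α β : Type*} [MeasurableSpace α] {μ : Measure α}
    [SFinite μ] [NeZero μ] {g : α → β} (h : ∀ᵐ q ∂μ.prod μ, g q.1 = g q.2) :
    ∃ c, ∀ᵐ p ∂μ, g p = c := by
  obtain ⟨p₀, hp₀⟩ := (Measure.ae_ae_of_ae_prod h).exists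
  exact ⟨g p₀, hp₀.mono fun _ hp => hp.symm⟩

theorem total_jump_rate_constant_general
    (N K : ℕ) (ℏ : ℝ)
    (κ : Fin K → EuclideanSpace ℝ (Fin N))
    (f : Fin K → EuclideanSpace ℝ (Fin N) → ℂ)
    (φ : EuclideanSpace ℝ (Fin N) → ℂ)
    (hφ_ne : ∀ᵐ p : EuclideanSpace ℝ (Fin N) ∂volume, φ p ≠ 0)
    (hdiag : ∀ᵐ p : EuclideanSpace ℝ (Fin N) ∂volume,
      ∑ k : Fin K, ‖f k (p + ℏ • κ k) * φ (p + ℏ • κ k)‖ ^ 2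
        = (∑ k : Fin K, ‖f k p‖ ^ 2) * ‖φ p‖ ^ 2)
    (hker : ∀ᵐ q : EuclideanSpace ℝ (Fin N) × EuclideanSpace ℝ (Fin N)
        ∂(volume.prod volume),
      ∑ k : Fin K, f k (q.1 + ℏ • κ k) * φ (q.1 + ℏ • κ k) *
          (starRingEnd ℂ) (f k (q.2 + ℏ • κ k) * φ (q.2 + ℏ • κ k))
        = (1 / 2 : ℂ) * (((∑ k : Fin K, ‖f k q.1‖ ^ 2) + ∑ k : Fin K, ‖f k q.2‖ ^ 2 : ℝ) : ℂ) *
            (φ q.1 * (starRingEnd ℂ) (φ q.2))) :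
    ∃ C : ℝ, ∀ᵐ p : EuclideanSpace ℝ (Fin N) ∂volume,
      (∑ k : Fin K, ‖f k p‖ ^ 2) = C := by
  let μ : Measure (EuclideanSpace ℝ (Fin N)) := volume
  have hfst := Measure.quasiMeasurePreserving_fst (μ := μ) (ν := μ)
  have hsnd := Measure.quasiMeasurePreserving_snd (μ := μ) (ν := μ)
  refine exists_ae_eq_const_of_ae_prod (g := fun p => ∑ k : Fin K, ‖f k p‖ ^ 2) ?_
  filter_upwards [hker, hfst.ae hφ_ne, hsnd.ae hφ_ne, hfst.ae hdiag, hsnd.ae hdiag]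
    with q hq h₁ h₂ hd₁ hd₂
  exact eq_of_sum_mul_conj_eq h₁ h₂ hd₁ hd₂ hq

/-- **Constancy of the total jump rate** (intermediate step in the proof of Theorem 1).
In the momentum representation, if the pure state with a.e.-nonvanishing momentum
wavefunction `φ ∈ L²(ℝ^N, ℂ)` is annihilated by the translation-invariant Lindblad
dissipator `Σ_k D_{A(κ_k, f_k)}` — conditions (i) and (ii) — then the total
momentum-dependent jump rate `S(p) = Σ_k |f_k(p)|²` is almost everywhere constant. -/
theorem total_jump_rate_constant
    (N K : ℕ) (hK : 1 ≤ K) (ℏ : ℝ) (hℏ : 0 < ℏ)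
    (κ : Fin K → EuclideanSpace ℝ (Fin N))
    (f : Fin K → EuclideanSpace ℝ (Fin N) → ℂ)
    (hf_meas : ∀ k, Measurable (f k))
    (φ : EuclideanSpace ℝ (Fin N) → ℂ)
    (hφ_L2 : MemLp φ 2 (volume : Measure (EuclideanSpace ℝ (Fin N))))
    (hφ_ne : ∀ᵐ p : EuclideanSpace ℝ (Fin N) ∂volume, φ p ≠ 0)
    (hdiag : ∀ᵐ p : EuclideanSpace ℝ (Fin N) ∂volume,
      ∑ k : Fin K, ‖f k (p + ℏ • κ k) * φ (p + ℏ • κ k)‖ ^ 2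
        = (∑ k : Fin K, ‖f k p‖ ^ 2) * ‖φ p‖ ^ 2)
    (hker : ∀ᵐ q : EuclideanSpace ℝ (Fin N) × EuclideanSpace ℝ (Fin N)
        ∂(volume.prod volume),
      ∑ k : Fin K, f k (q.1 + ℏ • κ k) * φ (q.1 + ℏ • κ k) *
          (starRingEnd ℂ) (f k (q.2 + ℏ • κ k) * φ (q.2 + ℏ • κ k))
        = (1 / 2 : ℂ) * (((∑ k : Fin K, ‖f k q.1‖ ^ 2) + ∑ k : Fin K, ‖f k q.2‖ ^ 2 : ℝ) : ℂ) *
            (φ q.1 * (starRingEnd ℂ) (φ q.2))) :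
    ∃ C : ℝ, ∀ᵐ p : EuclideanSpace ℝ (Fin N) ∂volume,
      (∑ k : Fin K, ‖f k p‖ ^ 2) = C :=
  total_jump_rate_constant_general N K ℏ κ f φ hφ_ne hdiag hker
end
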